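/- arXiv:2011.09725 — 2 statements merged into one kernel-verified Lean document; each statement's English description precedes it below -/
import Mathlib

section
/- Let f ∈ L²(μ₁), g ∈ L²(μ₂), h ∈ L²(μ₃) with f ≠ 0 and g ≠ 0, and let F = f ⊗ g ⊗ h ∈ L²(μ₁ × μ₂ × μ₃). Set u₁ = f / ‖f‖, F¹(x₂,x₃) = ∫ F u₁(x₁) dμ₁(x₁), u₂ = g / ‖g‖, and F²(x₃) = ∫ F¹ u₂(x₂) dμ₂(x₂). Then F¹ = ‖f‖ · (g ⊗ h) in L²(μ₂ × μ₃), F² = ‖f‖‖g‖ · h in L²(μ₃), and u₁ ⊗ u₂ ⊗ F² = F in L²(μ₁ × μ₂ × μ₃), i.e. a single CP-TT sweep recovers a rank-one tensor exactly. -/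
open MeasureTheory

/-!
Contracting a pure tensor against one of its own factors, normalised, multiplies the
remaining factors by that factor's `L²` norm: `∫ f (f / ‖f‖) = ‖f‖`. Two contractions give
`F¹ = ‖f‖ (g ⊗ h)` and `F² = ‖f‖‖g‖ h`, pointwise, and `u₁ ⊗ u₂ ⊗ F²` undoes both
normalisations as soon as `‖f‖` and `‖g‖` are nonzero.
-/

section

variable {Ω : Type*} [MeasurableSpace Ω] {μ : Measure Ω}

lemma integral_sq_pos_of_memLp_two {f : Ω → ℝ} (hf : MemLp f 2 μ) (hf0 : ¬ f =ᵐ[μ] 0) :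
    0 < ∫ x, f x ^ 2 ∂μ := by
  have hsupp : Function.support (fun x => f x ^ 2) = Function.support f := by
    ext x; simp
  rw [integral_pos_iff_support_of_nonneg (fun x => sq_nonneg (f x)) hf.integrable_sq, hsupp,
    pos_iff_ne_zero]
  exact fun h => hf0 (ae_iff.mpr h)

/-- Holds for every `f`: if `∫ f² = 0` (or `f² ∉ L¹`), both sides vanish since `x / 0 = 0`. -/
lemma integral_mul_mul_div_sqrt_integral_sq (f : Ω → ℝ) (c : ℝ) :
    ∫ x, c * f x * (f x / √(∫ y, f y ^ 2 ∂μ)) ∂μ = c * √(∫ y, f y ^ 2 ∂μ) := by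
  set s := √(∫ y, f y ^ 2 ∂μ)
  have hs : s ^ 2 = ∫ y, f y ^ 2 ∂μ := Real.sq_sqrt (integral_nonneg fun y => sq_nonneg (f y))
  calc ∫ x, c * f x * (f x / s) ∂μ = c / s * ∫ x, f x ^ 2 ∂μ := by
        rw [← integral_const_mul]; congr 1; ext x; ring
    _ = c * s := by
        rw [← hs]
        rcases eq_or_ne s 0 with h0 | h0
        · simp [h0]
        · field_simp

end

theorem stmt10_general {Ω₁ Ω₂ Ω₃ : Type*}
    [MeasurableSpace Ω₁] [MeasurableSpace Ω₂] [MeasurableSpace Ω₃]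
    (μ₁ : Measure Ω₁) (μ₂ : Measure Ω₂) (μ₃ : Measure Ω₃)
    (f : Ω₁ → ℝ) (hf : MemLp f 2 μ₁) (hf0 : ¬ (f =ᵐ[μ₁] (0 : Ω₁ → ℝ)))
    (g : Ω₂ → ℝ) (hg : MemLp g 2 μ₂) (hg0 : ¬ (g =ᵐ[μ₂] (0 : Ω₂ → ℝ)))
    (h : Ω₃ → ℝ)
    (F : Ω₁ × Ω₂ × Ω₃ → ℝ) (hF : ∀ z, F z = f z.1 * g z.2.1 * h z.2.2)
    (nf : ℝ) (hnf : nf = Real.sqrt (∫ x, (f x) ^ 2 ∂μ₁))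
    (ng : ℝ) (hng : ng = Real.sqrt (∫ x, (g x) ^ 2 ∂μ₂))
    (u₁ : Ω₁ → ℝ) (hu₁ : ∀ x, u₁ x = f x / nf)
    (F₁ : Ω₂ × Ω₃ → ℝ) (hF₁ : ∀ p, F₁ p = ∫ x₁, F (x₁, p) * u₁ x₁ ∂μ₁)
    (u₂ : Ω₂ → ℝ) (hu₂ : ∀ x, u₂ x = g x / ng)
    (F₂ : Ω₃ → ℝ) (hF₂ : ∀ x₃, F₂ x₃ = ∫ x₂, F₁ (x₂, x₃) * u₂ x₂ ∂μ₂) :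
    (F₁ =ᵐ[μ₂.prod μ₃] fun p => nf * (g p.1 * h p.2)) ∧
    (F₂ =ᵐ[μ₃] fun x₃ => nf * ng * h x₃) ∧
    ((fun z : Ω₁ × Ω₂ × Ω₃ => u₁ z.1 * u₂ z.2.1 * F₂ z.2.2)
        =ᵐ[μ₁.prod (μ₂.prod μ₃)] F) := by
  have hF₁_eq (p : Ω₂ × Ω₃) : F₁ p = nf * (g p.1 * h p.2) := by
    calc F₁ p = ∫ x, g p.1 * h p.2 * f x * (f x / nf) ∂μ₁ := by
          simp only [hF₁, hF, hu₁]; congr 1; ext x; ring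
      _ = nf * (g p.1 * h p.2) := by
          rw [hnf, integral_mul_mul_div_sqrt_integral_sq, mul_comm]
  have hF₂_eq (x₃ : Ω₃) : F₂ x₃ = nf * ng * h x₃ := by
    calc F₂ x₃ = ∫ x, nf * h x₃ * g x * (g x / ng) ∂μ₂ := by
          simp only [hF₂, hF₁_eq, hu₂]; congr 1; ext x; ring
      _ = nf * ng * h x₃ := by
          rw [hng, integral_mul_mul_div_sqrt_integral_sq]; ring
  have hnf0 : nf ≠ 0 := by
    rw [hnf]; exact (Real.sqrt_pos.mpr (integral_sq_pos_of_memLp_two hf hf0)).ne'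
  have hng0 : ng ≠ 0 := by
    rw [hng]; exact (Real.sqrt_pos.mpr (integral_sq_pos_of_memLp_two hg hg0)).ne'
  refine ⟨.of_forall hF₁_eq, .of_forall hF₂_eq, .of_forall fun z => ?_⟩
  simp only [hu₁, hu₂, hF₂_eq, hF]
  field_simp

/-- A single CP-TT sweep recovers a rank-one third-order tensor
`F = f ⊗ g ⊗ h` exactly: `F¹ = ‖f‖ (g ⊗ h)`, `F² = ‖f‖‖g‖ h`, and
`u₁ ⊗ u₂ ⊗ F² = F` in the respective `L²` spaces. -/
theorem stmt10 {Ω₁ Ω₂ Ω₃ : Type*}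
    [MeasurableSpace Ω₁] [MeasurableSpace Ω₂] [MeasurableSpace Ω₃]
    (μ₁ : Measure Ω₁) (μ₂ : Measure Ω₂) (μ₃ : Measure Ω₃)
    [SigmaFinite μ₁] [SigmaFinite μ₂] [SigmaFinite μ₃]
    (f : Ω₁ → ℝ) (hf : MemLp f 2 μ₁) (hf0 : ¬ (f =ᵐ[μ₁] (0 : Ω₁ → ℝ)))
    (g : Ω₂ → ℝ) (hg : MemLp g 2 μ₂) (hg0 : ¬ (g =ᵐ[μ₂] (0 : Ω₂ → ℝ)))
    (h : Ω₃ → ℝ) (hh : MemLp h 2 μ₃)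
    (F : Ω₁ × Ω₂ × Ω₃ → ℝ) (hF : ∀ z, F z = f z.1 * g z.2.1 * h z.2.2)
    (nf : ℝ) (hnf : nf = Real.sqrt (∫ x, (f x) ^ 2 ∂μ₁))
    (ng : ℝ) (hng : ng = Real.sqrt (∫ x, (g x) ^ 2 ∂μ₂))
    (u₁ : Ω₁ → ℝ) (hu₁ : ∀ x, u₁ x = f x / nf)
    (F₁ : Ω₂ × Ω₃ → ℝ) (hF₁ : ∀ p, F₁ p = ∫ x₁, F (x₁, p) * u₁ x₁ ∂μ₁)
    (u₂ : Ω₂ → ℝ) (hu₂ : ∀ x, u₂ x = g x / ng)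
    (F₂ : Ω₃ → ℝ) (hF₂ : ∀ x₃, F₂ x₃ = ∫ x₂, F₁ (x₂, x₃) * u₂ x₂ ∂μ₂) :
    (F₁ =ᵐ[μ₂.prod μ₃] fun p => nf * (g p.1 * h p.2)) ∧
    (F₂ =ᵐ[μ₃] fun x₃ => nf * ng * h x₃) ∧
    ((fun z : Ω₁ × Ω₂ × Ω₃ => u₁ z.1 * u₂ z.2.1 * F₂ z.2.2)
        =ᵐ[μ₁.prod (μ₂.prod μ₃)] F) :=
  stmt10_general μ₁ μ₂ μ₃ f hf hf0 g hg hg0 h F hF nf hnf ng hng u₁ hu₁ F₁ hF₁ u₂ hu₂ F₂ hF₂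
end

section
/- Let (u_j)_{j≥1} be an orthonormal family in L²(μ₁), (v_j)_{j≥1} an orthonormal family in L²(μ₂), and (σ_j)_{j≥1} nonnegative reals with ∑_j σ_j² < ∞ and σ₁ ≥ σ_j for all j. Suppose F ∈ L²(μ₁ × μ₂) satisfies F = ∑_{j≥1} σ_j u_j ⊗ v_j, the series converging in L²(μ₁ × μ₂). Then for every a ∈ L²(μ₁) and b ∈ L²(μ₂), ‖F - a ⊗ b‖²_{L²(μ₁ × μ₂)} ≥ ∑_{j≥2} σ_j² = ‖F - σ₁ u₁ ⊗ v₁‖²_{L²(μ₁ × μ₂)}; i.e. the top singular pair gives a best rank-one approximation of F. -/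
/-! In `L²(μ₁ × μ₂)` the functions `u j ⊗ v j` are orthonormal, so `‖F‖² = ∑ σ_j²` and
`⟪F, a ⊗ b⟫ = ∑ σ_j ⟪u_j, a⟫ ⟪v_j, b⟫ ≤ σ₀ ‖a‖ ‖b‖` by Cauchy–Schwarz and Bessel's inequality.
With `t = ‖a ⊗ b‖ = ‖a‖ ‖b‖` this gives
`‖F - a ⊗ b‖² ≥ ∑ σ_j² - 2 σ₀ t + t² = ∑_{j ≥ 1} σ_j² + (σ₀ - t)²`,
with equality for `a ⊗ b = σ₀ u₀ ⊗ v₀`. -/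

open MeasureTheory Filter Finset
open scoped RealInnerProductSpace Topology

section Hilbert

variable {E : Type*} [NormedAddCommGroup E] [InnerProductSpace ℝ E]

theorem Orthonormal.sum_abs_inner_mul_abs_inner_le {ι E₁ E₂ : Type*}
    [NormedAddCommGroup E₁] [InnerProductSpace ℝ E₁] [NormedAddCommGroup E₂]
    [InnerProductSpace ℝ E₂] {u : ι → E₁} {v : ι → E₂} (hu : Orthonormal ℝ u)
    (hv : Orthonormal ℝ v) (a : E₁) (b : E₂) (s : Finset ι) :
    ∑ j ∈ s, |⟪u j, a⟫| * |⟪v j, b⟫| ≤ ‖a‖ * ‖b‖ := by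
  have bessel_u : √(∑ j ∈ s, |⟪u j, a⟫| ^ 2) ≤ ‖a‖ :=
    Real.sqrt_le_iff.mpr ⟨norm_nonneg a, by simpa using hu.sum_inner_products_le a⟩
  have bessel_v : √(∑ j ∈ s, |⟪v j, b⟫| ^ 2) ≤ ‖b‖ :=
    Real.sqrt_le_iff.mpr ⟨norm_nonneg b, by simpa using hv.sum_inner_products_le b⟩
  calc ∑ j ∈ s, |⟪u j, a⟫| * |⟪v j, b⟫|
      ≤ √(∑ j ∈ s, |⟪u j, a⟫| ^ 2) * √(∑ j ∈ s, |⟪v j, b⟫| ^ 2) :=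
        Real.sum_mul_le_sqrt_mul_sqrt s _ _
    _ ≤ ‖a‖ * ‖b‖ := mul_le_mul bessel_u bessel_v (by positivity) (norm_nonneg a)

namespace Orthonormal

variable {e : ℕ → E} {σ : ℕ → ℝ} {f : E}

theorem inner_eq_of_tendsto_sum (he : Orthonormal ℝ e)
    (hf : Tendsto (fun n => ∑ j ∈ range n, σ j • e j) atTop (𝓝 f)) (k : ℕ) :
    ⟪e k, f⟫ = σ k := by
  refine tendsto_nhds_unique ((tendsto_const_nhds (x := e k)).inner hf)
    (tendsto_const_nhds.congr' ?_)
  filter_upwards [eventually_gt_atTop k] with n hn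
  exact (he.inner_right_sum σ (mem_range.mpr hn)).symm

theorem hasSum_sq_of_tendsto_sum (he : Orthonormal ℝ e)
    (hf : Tendsto (fun n => ∑ j ∈ range n, σ j • e j) atTop (𝓝 f)) :
    HasSum (fun j => σ j ^ 2) (‖f‖ ^ 2) := by
  refine (hasSum_iff_tendsto_nat_of_nonneg (fun j => sq_nonneg (σ j)) _).mpr ?_
  have hnorm : ∀ n, ‖∑ j ∈ range n, σ j • e j‖ ^ 2 = ∑ j ∈ range n, σ j ^ 2 := fun n => by
    rw [← real_inner_self_eq_norm_sq, he.inner_sum]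
    simp [sq]
  simpa only [hnorm] using (hf.norm.pow 2)

theorem tsum_sq_succ_eq_of_tendsto_sum (he : Orthonormal ℝ e)
    (hf : Tendsto (fun n => ∑ j ∈ range n, σ j • e j) atTop (𝓝 f)) :
    ∑' j, σ (j + 1) ^ 2 = ‖f‖ ^ 2 - σ 0 ^ 2 := by
  simpa using ((hasSum_nat_add_iff' 1).mpr (he.hasSum_sq_of_tendsto_sum hf)).tsum_eq

theorem norm_sub_smul_sq_of_tendsto_sum (he : Orthonormal ℝ e)
    (hf : Tendsto (fun n => ∑ j ∈ range n, σ j • e j) atTop (𝓝 f)) :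
    ‖f - σ 0 • e 0‖ ^ 2 = ∑' j, σ (j + 1) ^ 2 := by
  rw [he.tsum_sq_succ_eq_of_tendsto_sum hf, norm_sub_sq_real, real_inner_smul_right,
    real_inner_comm, he.inner_eq_of_tendsto_sum hf, norm_smul, he.1 0, Real.norm_eq_abs,
    mul_one, sq_abs]
  ring

theorem tsum_sq_succ_le_norm_sub_sq (he : Orthonormal ℝ e)
    (hf : Tendsto (fun n => ∑ j ∈ range n, σ j • e j) atTop (𝓝 f)) {g : E}
    (hg : ⟪f, g⟫ ≤ σ 0 * ‖g‖) :
    ∑' j, σ (j + 1) ^ 2 ≤ ‖f - g‖ ^ 2 := by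
  rw [he.tsum_sq_succ_eq_of_tendsto_sum hf, norm_sub_sq_real]
  nlinarith [sq_nonneg (σ 0 - ‖g‖)]

theorem inner_le_of_inner_eq_inner_mul_inner {E₁ E₂ : Type*}
    [NormedAddCommGroup E₁] [InnerProductSpace ℝ E₁] [NormedAddCommGroup E₂]
    [InnerProductSpace ℝ E₂] {u : ℕ → E₁} {v : ℕ → E₂} (hu : Orthonormal ℝ u)
    (hv : Orthonormal ℝ v) (hσ : ∀ j, 0 ≤ σ j) (hσ₀ : ∀ j, σ j ≤ σ 0)
    (hf : Tendsto (fun n => ∑ j ∈ range n, σ j • e j) atTop (𝓝 f)) {g : E} {a : E₁} {b : E₂}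
    (hg : ∀ j, ⟪e j, g⟫ = ⟪u j, a⟫ * ⟪v j, b⟫) :
    ⟪f, g⟫ ≤ σ 0 * (‖a‖ * ‖b‖) := by
  refine le_of_tendsto' (hf.inner tendsto_const_nhds) fun n => ?_
  calc ⟪∑ j ∈ range n, σ j • e j, g⟫
      = ∑ j ∈ range n, σ j * (⟪u j, a⟫ * ⟪v j, b⟫) := by
        simp only [sum_inner, real_inner_smul_left, hg]
    _ ≤ ∑ j ∈ range n, σ 0 * (|⟪u j, a⟫| * |⟪v j, b⟫|) := by
        refine sum_le_sum fun j _ => ?_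
        rw [← abs_mul]
        exact (mul_le_mul_of_nonneg_left (le_abs_self _) (hσ j)).trans
          (mul_le_mul_of_nonneg_right (hσ₀ j) (abs_nonneg _))
    _ ≤ σ 0 * (‖a‖ * ‖b‖) := by
        rw [← mul_sum]
        exact mul_le_mul_of_nonneg_left (hu.sum_abs_inner_mul_abs_inner_le hv a b _) (hσ 0)

end Orthonormal

end Hilbert

namespace MeasureTheory.MemLp

section L2

variable {Ω : Type*} [MeasurableSpace Ω] {μ : Measure Ω}

theorem toLp_finset_sum {E : Type*} [NormedAddCommGroup E] {p : ENNReal} {ι : Type*}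
    (s : Finset ι) {f : ι → Ω → E} (hf : ∀ i, MemLp (f i) p μ) :
    (memLp_finsetSum' s fun i _ => hf i).toLp (∑ i ∈ s, f i) = ∑ i ∈ s, (hf i).toLp (f i) := by
  classical
  induction s using Finset.induction_on with
  | empty => rfl
  | insert i s hi ih => simp only [sum_insert hi, ← ih]; rfl

theorem inner_toLp {f g : Ω → ℝ} (hf : MemLp f 2 μ) (hg : MemLp g 2 μ) :
    ⟪hf.toLp f, hg.toLp g⟫ = ∫ x, f x * g x ∂μ := by
  rw [L2.inner_def]
  refine integral_congr_ae ?_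
  filter_upwards [hf.coeFn_toLp, hg.coeFn_toLp] with x hfx hgx
  simp [hfx, hgx, mul_comm]

theorem norm_toLp_sub_toLp_sq {f g : Ω → ℝ} (hf : MemLp f 2 μ) (hg : MemLp g 2 μ) :
    ‖hf.toLp f - hg.toLp g‖ ^ 2 = ∫ x, (f x - g x) ^ 2 ∂μ := by
  rw [← toLp_sub, ← real_inner_self_eq_norm_sq, inner_toLp]
  simp [sq]

theorem tendsto_toLp_of_tendsto_integral_sub_sq {F : Ω → ℝ} {G : ℕ → Ω → ℝ}
    (hF : MemLp F 2 μ) (hG : ∀ n, MemLp (G n) 2 μ)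
    (h : Tendsto (fun n => ∫ x, (F x - G n x) ^ 2 ∂μ) atTop (𝓝 0)) :
    Tendsto (fun n => (hG n).toLp (G n)) atTop (𝓝 (hF.toLp F)) := by
  rw [tendsto_iff_norm_sub_tendsto_zero]
  have hsq : Tendsto (fun n => ‖(hG n).toLp (G n) - hF.toLp F‖ ^ 2) atTop (𝓝 0) := by
    simpa only [norm_sub_rev, norm_toLp_sub_toLp_sq] using h
  simpa using hsq.sqrt

end L2

section Prod

variable {Ω₁ Ω₂ : Type*} [MeasurableSpace Ω₁] [MeasurableSpace Ω₂]
  {μ₁ : Measure Ω₁} {μ₂ : Measure Ω₂}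

theorem mul_prod_two {a : Ω₁ → ℝ} {b : Ω₂ → ℝ} (ha : MemLp a 2 μ₁) (hb : MemLp b 2 μ₂) :
    MemLp (fun z : Ω₁ × Ω₂ => a z.1 * b z.2) 2 (μ₁.prod μ₂) := by
  refine (memLp_two_iff_integrable_sq (ha.1.comp_fst.mul hb.1.comp_snd)).mpr ?_
  simpa only [Pi.mul_apply, mul_pow] using
    ((memLp_two_iff_integrable_sq ha.1).mp ha).mul_prod ((memLp_two_iff_integrable_sq hb.1).mp hb)

theorem inner_toLp_mul_prod_two [SFinite μ₁] [SFinite μ₂] {a c : Ω₁ → ℝ} {b d : Ω₂ → ℝ}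
    (ha : MemLp a 2 μ₁) (hb : MemLp b 2 μ₂) (hc : MemLp c 2 μ₁) (hd : MemLp d 2 μ₂) :
    ⟪(ha.mul_prod_two hb).toLp _, (hc.mul_prod_two hd).toLp _⟫ =
      ⟪ha.toLp a, hc.toLp c⟫ * ⟪hb.toLp b, hd.toLp d⟫ := by
  simp only [inner_toLp, ← integral_prod_mul]
  congr 1 with z
  ring

theorem norm_toLp_mul_prod_two [SFinite μ₁] [SFinite μ₂] {a : Ω₁ → ℝ} {b : Ω₂ → ℝ}
    (ha : MemLp a 2 μ₁) (hb : MemLp b 2 μ₂) :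
    ‖(ha.mul_prod_two hb).toLp _‖ = ‖ha.toLp a‖ * ‖hb.toLp b‖ := by
  rw [← sq_eq_sq₀ (norm_nonneg _) (by positivity), mul_pow]
  simp only [← real_inner_self_eq_norm_sq]
  exact inner_toLp_mul_prod_two ha hb ha hb

end Prod

end MeasureTheory.MemLp

theorem orthonormal_toLp_of_integral_mul {Ω ι : Type*} [MeasurableSpace Ω] {μ : Measure Ω}
    [DecidableEq ι] {u : ι → Ω → ℝ} (hu : ∀ j, MemLp (u j) 2 μ)
    (huo : ∀ i j, ∫ x, u i x * u j x ∂μ = if i = j then 1 else 0) :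
    Orthonormal ℝ fun j => (hu j).toLp (u j) := by
  rw [orthonormal_iff_ite]
  intro i j
  rw [MemLp.inner_toLp, huo]

theorem stmt12_general {Ω₁ Ω₂ : Type*} [MeasurableSpace Ω₁] [MeasurableSpace Ω₂]
    (μ₁ : Measure Ω₁) (μ₂ : Measure Ω₂) [SigmaFinite μ₁] [SigmaFinite μ₂]
    (u : ℕ → Ω₁ → ℝ) (hu : ∀ j, MemLp (u j) 2 μ₁)
    (huo : ∀ i j, ∫ x, u i x * u j x ∂μ₁ = if i = j then 1 else 0)
    (v : ℕ → Ω₂ → ℝ) (hv : ∀ j, MemLp (v j) 2 μ₂)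
    (hvo : ∀ i j, ∫ y, v i y * v j y ∂μ₂ = if i = j then 1 else 0)
    (σ : ℕ → ℝ) (hσ : ∀ j, 0 ≤ σ j)
    (hσtop : ∀ j, σ j ≤ σ 0)
    (F : Ω₁ × Ω₂ → ℝ) (hF : MemLp F 2 (μ₁.prod μ₂))
    (hconv : Tendsto
      (fun n => ∫ z, (F z - ∑ j ∈ Finset.range n, σ j * u j z.1 * v j z.2) ^ 2
        ∂(μ₁.prod μ₂)) atTop (nhds 0)) :
    (∀ (a : Ω₁ → ℝ) (b : Ω₂ → ℝ), MemLp a 2 μ₁ → MemLp b 2 μ₂ →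
      (∑' j : ℕ, (σ (j + 1)) ^ 2)
        ≤ ∫ z, (F z - a z.1 * b z.2) ^ 2 ∂(μ₁.prod μ₂)) ∧
    (∑' j : ℕ, (σ (j + 1)) ^ 2)
      = ∫ z, (F z - σ 0 * u 0 z.1 * v 0 z.2) ^ 2 ∂(μ₁.prod μ₂) := by
  have hU := orthonormal_toLp_of_integral_mul hu huo
  have hV := orthonormal_toLp_of_integral_mul hv hvo
  have huv j := (hu j).mul_prod_two (hv j)
  set e := fun j => (huv j).toLp _
  have he : Orthonormal ℝ e := by
    rw [orthonormal_iff_ite] at hU hV ⊢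
    intro i j
    rw [MemLp.inner_toLp_mul_prod_two (hu i) (hv i) (hu j) (hv j), hU, hV]
    split_ifs <;> simp
  have hsum n : MemLp (∑ j ∈ range n, σ j • fun z : Ω₁ × Ω₂ => u j z.1 * v j z.2) 2
      (μ₁.prod μ₂) := memLp_finsetSum' _ fun j _ => (huv j).const_smul (σ j)
  have hlim : Tendsto (fun n => ∑ j ∈ range n, σ j • e j) atTop (𝓝 (hF.toLp F)) := by
    have := MemLp.tendsto_toLp_of_tendsto_integral_sub_sq hF hsum
      (by simpa only [Finset.sum_apply, Pi.smul_apply, smul_eq_mul, mul_assoc] using hconv)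
    exact this.congr fun n => MemLp.toLp_finset_sum _ fun j => (huv j).const_smul (σ j)
  refine ⟨fun a b ha hb => ?_, ?_⟩
  · rw [← hF.norm_toLp_sub_toLp_sq (ha.mul_prod_two hb)]
    refine he.tsum_sq_succ_le_norm_sub_sq hlim ?_
    rw [MemLp.norm_toLp_mul_prod_two ha hb]
    exact hU.inner_le_of_inner_eq_inner_mul_inner hV hσ hσtop hlim fun j =>
      MemLp.inner_toLp_mul_prod_two _ _ _ _
  · simp only [mul_assoc]
    rw [← he.norm_sub_smul_sq_of_tendsto_sum hlim, ← MemLp.toLp_const_smul,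
      hF.norm_toLp_sub_toLp_sq]
    rfl

/-- Under the assumptions of Statement 11, if moreover
`σ₁ ≥ σ_j` for all `j`, then for every `a ∈ L²(μ₁)`, `b ∈ L²(μ₂)`,
`‖F - a ⊗ b‖² ≥ ∑_{j≥2} σ_j² = ‖F - σ₁ u₁ ⊗ v₁‖²`: the top singular pair
gives a best rank-one approximation. (Indices shifted so `j = 0` is first.) -/
theorem stmt12 {Ω₁ Ω₂ : Type*} [MeasurableSpace Ω₁] [MeasurableSpace Ω₂]
    (μ₁ : Measure Ω₁) (μ₂ : Measure Ω₂) [SigmaFinite μ₁] [SigmaFinite μ₂]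
    (u : ℕ → Ω₁ → ℝ) (hu : ∀ j, MemLp (u j) 2 μ₁)
    (huo : ∀ i j, ∫ x, u i x * u j x ∂μ₁ = if i = j then 1 else 0)
    (v : ℕ → Ω₂ → ℝ) (hv : ∀ j, MemLp (v j) 2 μ₂)
    (hvo : ∀ i j, ∫ y, v i y * v j y ∂μ₂ = if i = j then 1 else 0)
    (σ : ℕ → ℝ) (hσ : ∀ j, 0 ≤ σ j) (hσs : Summable fun j => (σ j) ^ 2)
    (hσtop : ∀ j, σ j ≤ σ 0)
    (F : Ω₁ × Ω₂ → ℝ) (hF : MemLp F 2 (μ₁.prod μ₂))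
    (hconv : Tendsto
      (fun n => ∫ z, (F z - ∑ j ∈ Finset.range n, σ j * u j z.1 * v j z.2) ^ 2
        ∂(μ₁.prod μ₂)) atTop (nhds 0)) :
    (∀ (a : Ω₁ → ℝ) (b : Ω₂ → ℝ), MemLp a 2 μ₁ → MemLp b 2 μ₂ →
      (∑' j : ℕ, (σ (j + 1)) ^ 2)
        ≤ ∫ z, (F z - a z.1 * b z.2) ^ 2 ∂(μ₁.prod μ₂)) ∧
    (∑' j : ℕ, (σ (j + 1)) ^ 2)
      = ∫ z, (F z - σ 0 * u 0 z.1 * v 0 z.2) ^ 2 ∂(μ₁.prod μ₂) :=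
  stmt12_general μ₁ μ₂ u hu huo v hv hvo σ hσ hσtop F hF hconv
end
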